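/- Let m_{2k}(γ_T^{(m)}) = Σ_{π∈P_2(2k)} m^{k−1−f(π)} I(π), where I(π) = ∫_{[0,1]×[−1,1]^k} Π_{j=1}^{2k} 1_{[0,1]}(x_0 + Σ_{q=1}^j ε_π(q)x_{π(q)}) dx, and f(π) ≥ k−1 with equality iff π is noncrossing, and I(π) = 1 for noncrossing π. Then lim_{m→∞} m_{2k}(γ_T^{(m)}) = C_k, the k-th Catalan number. -/

import Mathlib

/-!
Every term `m ^ (k - 1 - f(π)) * I(π)` of `mom m k` has a nonpositive exponent, which vanishes
exactly for noncrossing `π`, where `I(π) = 1`; so the moments tend to the number of noncrossing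
pair partitions of `2k` points. Marking the openers of `π` as up steps gives a Dyck path, and
conversely a Dyck path determines its noncrossing pairing: each up step is matched with the first
later step that takes the path below the height it reached. Dyck paths of semilength `k` are
counted by the Catalan number `C_k`.
-/

open Matrix MeasureTheory
open scoped Kronecker BigOperators

/-- `a i, b i` list the blocks `{a i, b i}` of a pair partition of `{0,...,2k-1}`,
with `a i < b i` and blocks labeled so that `a` is increasing. -/
abbrev IsPairPart (k : ℕ) (a b : Fin k → Fin (2*k)) : Prop :=
  (∀ i, a i < b i) ∧ (∀ i j : Fin k, i < j → a i < a j) ∧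
  (∀ i j : Fin k, i ≠ j → a i ≠ a j ∧ a i ≠ b j ∧ b i ≠ b j) ∧
  (∀ x : Fin (2*k), ∃ i, x = a i ∨ x = b i)

/-- cyclic successor -/
def cyc {n : ℕ} (x : Fin n) : Fin n := ⟨(x.val + 1) % n, Nat.mod_lt _ x.pos⟩

/-- the relation generated by the equations `t_{a i} = t_{cyc (b i)}`, `t_{b i} = t_{cyc (a i)}` -/
def ppRel {k : ℕ} (a b : Fin k → Fin (2*k)) (x y : Fin (2*k)) : Prop :=
  ∃ i, (x = a i ∧ y = cyc (b i)) ∨ (x = b i ∧ y = cyc (a i))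

/-- `g(π)`: the number of equivalence classes ("circles") -/
noncomputable def gCircles {k : ℕ} (a b : Fin k → Fin (2*k)) : ℕ :=
  Nat.card (Quotient (Relation.EqvGen.setoid (ppRel a b)))

/-- coefficient matrix over ℚ of the linear system determined by the pair partition -/
def eqMat {k : ℕ} (a b : Fin k → Fin (2*k)) : Matrix (Fin k ⊕ Fin k) (Fin (2*k)) ℚ :=
  fun e x => match e with
  | Sum.inl i => (if x = a i then 1 else 0) - (if x = cyc (b i) then 1 else 0)
  | Sum.inr i => (if x = b i then 1 else 0) - (if x = cyc (a i) then 1 else 0)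

/-- `f(π)`: the rank of the linear system -/
noncomputable def fRank {k : ℕ} (a b : Fin k → Fin (2*k)) : ℕ := (eqMat a b).rank

/-- noncrossing pair partition -/
def Noncross {k : ℕ} (a b : Fin k → Fin (2*k)) : Prop :=
  ¬ ∃ i j, a i < a j ∧ a j < b i ∧ b i < b j

abbrev PP (k : ℕ) := {p : (Fin k → Fin (2*k)) × (Fin k → Fin (2*k)) // IsPairPart k p.1 p.2}

noncomputable section

/-- the label of the block containing `q` -/
def blk {k : ℕ} {a b : Fin k → Fin (2*k)} (h : IsPairPart k a b) (q : Fin (2*k)) : Fin k :=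
  (h.2.2.2 q).choose

/-- `ε_π(q) = 1` if `q` is the smaller element of its block, `-1` otherwise -/
def eps {k : ℕ} {a b : Fin k → Fin (2*k)} (h : IsPairPart k a b) (q : Fin (2*k)) : ℝ :=
  if q = a (blk h q) then 1 else -1

/-- `I(π) = ∫_{[0,1]×[-1,1]^k} ∏_{j=1}^{2k} 1_{[0,1]}(x_0 + Σ_{q=1}^j ε_π(q) x_{π(q)}) dx` -/
def ppIntegral {k : ℕ} {a b : Fin k → Fin (2*k)} (h : IsPairPart k a b) : ℝ :=
  ∫ x in Set.univ.pi
      (fun l : Fin (k+1) => if l = 0 then Set.Icc (0:ℝ) 1 else Set.Icc (-1) 1),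
    ∏ j : Fin (2*k), Set.indicator (Set.Icc (0:ℝ) 1) (fun _ => (1:ℝ))
      (x 0 + ∑ q ∈ Finset.Iic j, eps h q * x (blk h q).succ)

/-- the `2k`-th moment of `γ_T^{(m)}`:
`m_{2k} = Σ_{π ∈ P₂(2k)} m^{k-1-f(π)} I(π)`. -/
def mom (m k : ℕ) : ℝ :=
  ∑ p : PP k, (m : ℝ) ^ ((k : ℤ) - 1 - (fRank p.1.1 p.1.2 : ℤ)) * ppIntegral p.2

namespace NoncrossingPairing

open Finset DyckStep

section Height

variable {n : ℕ}

def stepValue : DyckStep → ℤ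
  | U => 1
  | D => -1

lemma count_U_sub_count_D (l : List DyckStep) :
    (l.count U : ℤ) - l.count D = (l.map stepValue).sum := by
  induction l with
  | nil => simp
  | cons s l ih => cases s <;> simp [stepValue, ← ih] <;> omega

def steps (O : Finset (Fin n)) (q : Fin n) : DyckStep := if q ∈ O then U else D

def height (O : Finset (Fin n)) (i : ℕ) : ℤ := ∑ q : Fin n with q.val < i, stepValue (steps O q)

lemma height_eq_count_take (O : Finset (Fin n)) (i : ℕ) :
    height O i = (((List.ofFn (steps O)).take i).count U : ℤ) -
      ((List.ofFn (steps O)).take i).count D := by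
  rw [count_U_sub_count_D, List.map_take, List.map_ofFn, List.sum_take_ofFn, height]
  rfl

lemma stepValue_steps (O : Finset (Fin n)) (q : Fin n) :
    stepValue (steps O q) = if q ∈ O then 1 else -1 := by
  unfold steps; split_ifs <;> rfl

lemma height_succ (O : Finset (Fin n)) (q : Fin n) :
    height O (q + 1) = height O q + if q ∈ O then 1 else -1 := by
  have hins : filter (fun j : Fin n => j.val < q + 1) univ =
      insert q (filter (fun j : Fin n => j.val < q) univ) := by
    ext j; simp [le_iff_eq_or_lt, Fin.val_eq_val]
  rw [height, height, hins, sum_insert (by simp), add_comm, stepValue_steps]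

lemma height_of_le (O : Finset (Fin n)) {i : ℕ} (hi : n ≤ i) :
    height O i = 2 * #O - n := by
  have huniv : filter (fun q : Fin n => q.val < i) univ = univ := by
    ext q; simpa using q.2.trans_le hi
  rw [height, huniv]
  have hO : #O ≤ n := by simpa using O.card_le_univ
  simp only [stepValue_steps, sum_ite, filter_mem_eq_inter, univ_inter, sum_const, nsmul_eq_mul,
    mul_one, filter_notMem_eq_sdiff, card_univ_sdiff, Fintype.card_fin,
    Nat.cast_sub hO]
  ring

end Height

section Partner

variable {n : ℕ} {O : Finset (Fin n)}

def IsBallot (O : Finset (Fin n)) : Prop := height O n = 0 ∧ ∀ i, 0 ≤ height O i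

def partnerCandidates (O : Finset (Fin n)) (p : Fin n) : Finset (Fin n) :=
  {x | p < x ∧ height O (x + 1) < height O (p + 1)}

noncomputable def partner (O : Finset (Fin n)) (p : Fin n) : Fin n :=
  if h : (partnerCandidates O p).Nonempty then (partnerCandidates O p).min' h else p

lemma partner_le {p x : Fin n} (hx : x ∈ partnerCandidates O p) : partner O p ≤ x := by
  rw [partner, dif_pos ⟨x, hx⟩]
  exact min'_le _ _ hx

lemma partner_eq_of_forall_le {p x : Fin n} (hx : x ∈ partnerCandidates O p)
    (hmin : ∀ y ∈ partnerCandidates O p, x ≤ y) : partner O p = x := by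
  refine le_antisymm (partner_le hx) ?_
  rw [partner, dif_pos ⟨x, hx⟩]
  exact le_min' _ _ _ hmin

lemma height_le_of_lt_of_le_partner {p : Fin n} {i : ℕ} (h1 : p.val < i)
    (h2 : i ≤ partner O p) : height O (p + 1) ≤ height O i := by
  obtain ⟨y, rfl⟩ : ∃ y, i = y + 1 := ⟨i - 1, by omega⟩
  rcases (show p.val = y ∨ p.val < y by omega) with rfl | hy
  · exact le_rfl
  by_contra hlt
  have hmem : (⟨y, by omega⟩ : Fin n) ∈ partnerCandidates O p := by
    simp only [partnerCandidates, mem_filter, mem_univ, true_and, Fin.lt_def]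
    exact ⟨hy, not_le.1 hlt⟩
  have : (partner O p : ℕ) ≤ y := partner_le hmem
  omega

lemma IsBallot.two_mul_card (hO : IsBallot O) : 2 * #O = n := by
  have h := height_of_le O le_rfl
  rw [hO.1] at h
  omega

variable (hO : IsBallot O)
include hO

lemma partnerCandidates_nonempty {p : Fin n} (hp : p ∈ O) :
    (partnerCandidates O p).Nonempty := by
  have hstep := height_succ O p
  rw [if_pos hp] at hstep
  have hnonneg := hO.2 p
  have hend : height O (n - 1 + 1) = 0 := by rw [Nat.sub_add_cancel p.pos]; exact hO.1
  have hpn : p.val ≠ n - 1 := fun h => by rw [← h] at hend; omega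
  refine ⟨⟨n - 1, by omega⟩, ?_⟩
  simp only [partnerCandidates, mem_filter, mem_univ, true_and, Fin.lt_def, hend]
  omega

lemma partner_mem_partnerCandidates {p : Fin n} (hp : p ∈ O) :
    partner O p ∈ partnerCandidates O p := by
  rw [partner, dif_pos (partnerCandidates_nonempty hO hp)]
  exact min'_mem _ _

lemma lt_partner {p : Fin n} (hp : p ∈ O) : p < partner O p :=
  (mem_filter.1 (partner_mem_partnerCandidates hO hp)).2.1

lemma partner_notMem {p : Fin n} (hp : p ∈ O) : partner O p ∉ O := by
  intro hr
  have hstep := height_succ O (partner O p)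
  rw [if_pos hr] at hstep
  have hlt := (mem_filter.1 (partner_mem_partnerCandidates hO hp)).2.2
  have hle := height_le_of_lt_of_le_partner (lt_partner hO hp) le_rfl
  omega

lemma height_partner_succ {p : Fin n} (hp : p ∈ O) :
    height O (partner O p + 1) = height O p := by
  have hstep := height_succ O (partner O p)
  rw [if_neg (partner_notMem hO hp)] at hstep
  have hstep' := height_succ O p
  rw [if_pos hp] at hstep'
  have hlt := (mem_filter.1 (partner_mem_partnerCandidates hO hp)).2.2
  have hle := height_le_of_lt_of_le_partner (lt_partner hO hp) le_rfl
  omega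

lemma partner_ne_of_lt {p q : Fin n} (hp : p ∈ O) (hq : q ∈ O) (hpq : p < q) :
    partner O p ≠ partner O q := by
  intro he
  have hle := height_le_of_lt_of_le_partner hpq (he ▸ (lt_partner hO hq).le)
  have hp' := height_partner_succ hO hp
  have hq' := height_partner_succ hO hq
  have hstep := height_succ O p
  rw [if_pos hp] at hstep
  rw [he] at hp'
  omega

lemma partner_injOn : Set.InjOn (partner O) O := by
  intro p hp q hq he
  by_contra hne
  rcases lt_or_gt_of_ne hne with h | h
  · exact partner_ne_of_lt hO hp hq h he
  · exact partner_ne_of_lt hO hq hp h he.symm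

lemma image_partner : O.image (partner O) = Oᶜ := by
  refine eq_of_subset_of_card_le (fun x hx => ?_) ?_
  · obtain ⟨p, hp, rfl⟩ := mem_image.1 hx
    exact mem_compl.2 (partner_notMem hO hp)
  · rw [card_image_of_injOn (partner_injOn hO), card_compl, Fintype.card_fin]
    have := hO.two_mul_card
    omega

end Partner

section BallotToPairing

variable {k : ℕ} {O : Finset (Fin (2 * k))}

lemma IsBallot.card_eq (hO : IsBallot O) : #O = k := by
  have := hO.two_mul_card
  omega

lemma isPairPart_partner (hO : IsBallot O) (hk : #O = k) :
    IsPairPart k (O.orderEmbOfFin hk) (partner O ∘ O.orderEmbOfFin hk) := by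
  set e := O.orderEmbOfFin hk
  have he : ∀ i, e i ∈ O := orderEmbOfFin_mem O hk
  have hrange : ∀ x ∈ O, ∃ i, e i = x := fun x hx => by
    rwa [← Finset.mem_coe, ← range_orderEmbOfFin O hk] at hx
  refine ⟨fun i => lt_partner hO (he i), fun i j hij => e.strictMono hij, fun i j hij =>
    ⟨e.injective.ne hij, fun h => partner_notMem hO (he j) (h ▸ he i :),
      fun h => hij (e.injective (partner_injOn hO (he i) (he j) h))⟩, fun x => ?_⟩
  by_cases hx : x ∈ O
  · obtain ⟨i, rfl⟩ := hrange x hx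
    exact ⟨i, Or.inl rfl⟩
  · have hx' : x ∈ O.image (partner O) := by rw [image_partner hO]; exact mem_compl.2 hx
    obtain ⟨p, hp, rfl⟩ := mem_image.1 hx'
    obtain ⟨i, rfl⟩ := hrange p hp
    exact ⟨i, Or.inr rfl⟩

lemma noncross_partner (hO : IsBallot O) (hk : #O = k) :
    Noncross (O.orderEmbOfFin hk) (partner O ∘ O.orderEmbOfFin hk) := by
  rintro ⟨i, j, hij, hji, hcross⟩
  set e := O.orderEmbOfFin hk
  have he : ∀ i, e i ∈ O := orderEmbOfFin_mem O hk
  have hstep_i := height_succ O (e i)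
  have hstep_j := height_succ O (e j)
  rw [if_pos (he i)] at hstep_i
  rw [if_pos (he j)] at hstep_j
  -- After `e j` the path is strictly above its height after `e i`, and it stays so up to
  -- `partner O (e j)`; but it falls back to the height before `e i` at `partner O (e i)`.
  have hret := height_partner_succ hO (he i)
  have hle_i := height_le_of_lt_of_le_partner hij hji.le
  have hle_j := height_le_of_lt_of_le_partner (p := e j) (i := partner O (e i) + 1)
    (Nat.lt_succ_of_lt hji) hcross
  omega

end BallotToPairing

section PairingToBallot

variable {k : ℕ} {a b : Fin k → Fin (2 * k)}

lemma IsPairPart.val_ne (h : IsPairPart k a b) {i j : Fin k} (hij : i ≠ j) :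
    (a i : ℕ) ≠ a j ∧ (a i : ℕ) ≠ b j ∧ (b i : ℕ) ≠ b j := by
  obtain ⟨h1, h2, h3⟩ := h.2.2.1 i j hij
  exact ⟨Fin.val_ne_of_ne h1, Fin.val_ne_of_ne h2, Fin.val_ne_of_ne h3⟩

lemma IsPairPart.bijective_sumElim (h : IsPairPart k a b) : Function.Bijective (Sum.elim a b) := by
  refine ⟨?_, fun x => ?_⟩
  · have hlt := h.1
    rintro (i | i) (j | j) hij <;>
      simp only [Sum.elim_inl, Sum.elim_inr, Sum.inl.injEq, Sum.inr.injEq, reduceCtorEq] at hij ⊢ <;>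
      by_contra hne
    · exact (h.2.2.1 i j hne).1 hij
    · exact (h.2.2.1 i j (by rintro rfl; exact (hlt i).ne hij)).2.1 hij
    · exact (h.2.2.1 j i (by rintro rfl; exact (hlt j).ne hij.symm)).2.1 hij.symm
    · exact (h.2.2.1 i j hne).2.2 hij
  · obtain ⟨i, rfl | rfl⟩ := h.2.2.2 x
    exacts [⟨.inl i, rfl⟩, ⟨.inr i, rfl⟩]

lemma height_image_eq_card (h : IsPairPart k a b) (x : ℕ) :
    height (univ.image a) x = #{j | (a j : ℕ) < x ∧ x ≤ b j} := by
  have hb : ∀ j, b j ∉ univ.image a := fun j hj => by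
    obtain ⟨i, -, hi⟩ := mem_image.1 hj
    exact ((IsPairPart.bijective_sumElim h).1.ne (a₁ := .inl i) (a₂ := .inr j) (by simp)) hi
  rw [height, sum_filter, ← (IsPairPart.bijective_sumElim h).sum_comp, Fintype.sum_sum_type,
    natCast_card_filter, ← sum_add_distrib]
  refine sum_congr rfl fun j _ => ?_
  have := h.1 j
  simp only [Sum.elim_inl, Sum.elim_inr, stepValue_steps, mem_image_of_mem a (mem_univ j), hb,
    if_true, if_false]
  split_ifs <;> omega

lemma isBallot_image (h : IsPairPart k a b) : IsBallot (univ.image a) := by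
  refine ⟨?_, fun i => ?_⟩ <;> rw [height_image_eq_card h]
  · simp only [Nat.cast_eq_zero, card_eq_zero, filter_eq_empty_iff, mem_univ, true_implies,
      not_and, not_le]
    exact fun j _ => (b j).isLt
  · positivity

lemma partner_image (h : IsPairPart k a b) (hnc : Noncross a b) (i : Fin k) :
    partner (univ.image a) (a i) = b i := by
  have hab := h.1
  apply partner_eq_of_forall_le
  · refine mem_filter.2 ⟨mem_univ _, h.1 i, ?_⟩
    rw [height_image_eq_card h, height_image_eq_card h, Nat.cast_lt]
    refine card_lt_card ((ssubset_iff_of_subset fun j hj => ?_).2 ⟨i, ?_⟩)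
    · simp only [mem_filter, mem_univ, true_and] at hj ⊢
      have hji : j ≠ i := by rintro rfl; omega
      have hne := IsPairPart.val_ne h hji
      have hji' : (a j : ℕ) < b i := lt_of_le_of_ne (Nat.le_of_lt_succ hj.1) hne.2.1
      have : ¬ (a i : ℕ) < a j := fun hlt => hnc ⟨i, j, hlt, hji', hj.2⟩
      have := hab i
      omega
    · simp only [mem_filter, mem_univ, true_and]
      have := hab i
      omega
  · rintro y hy
    by_contra hlt
    simp only [partnerCandidates, mem_filter, mem_univ, true_and, height_image_eq_card h,
      Nat.cast_lt] at hy
    refine hy.2.not_ge (card_le_card fun j hj => ?_)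
    simp only [mem_filter, mem_univ, true_and] at hj ⊢
    rcases eq_or_ne j i with rfl | hji
    · exact ⟨by omega, by omega⟩
    · have hne := IsPairPart.val_ne h hji
      have hji' : (a j : ℕ) < a i := lt_of_le_of_ne (Nat.le_of_lt_succ hj.1) hne.1
      have : ¬ (b j : ℕ) < b i := fun hlt' => hnc ⟨j, i, hji', hj.2, hlt'⟩
      have := hab j
      have := hab i
      have : (y : ℕ) < b i := not_le.1 hlt
      omega

end PairingToBallot

noncomputable def noncrossEquivBallot (k : ℕ) :
    {p : PP k // Noncross p.1.1 p.1.2} ≃ {O : Finset (Fin (2 * k)) // IsBallot O} where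
  toFun p := ⟨univ.image p.1.1.1, isBallot_image p.1.2⟩
  invFun O := ⟨⟨(O.1.orderEmbOfFin O.2.card_eq, partner O.1 ∘ O.1.orderEmbOfFin O.2.card_eq),
    isPairPart_partner O.2 _⟩, noncross_partner O.2 _⟩
  left_inv := by
    rintro ⟨⟨⟨a, b⟩, h⟩, hnc⟩
    have ha : ⇑((univ.image a).orderEmbOfFin (isBallot_image h).card_eq) = a :=
      (orderEmbOfFin_unique _ (fun i => mem_image_of_mem a (mem_univ i)) h.2.1).symm
    refine Subtype.ext (Subtype.ext (Prod.ext ha (funext fun i => ?_)))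
    simp only [Function.comp_apply, ha, partner_image h hnc]
  right_inv O := Subtype.ext (image_orderEmbOfFin_univ _ _)

section BallotToDyck

variable {n : ℕ}

def openers (l : List DyckStep) : Finset (Fin n) := {q | l[q.val]? = some U}

lemma ofFn_steps_openers {l : List DyckStep} (hl : l.length = n) :
    List.ofFn (steps (openers l : Finset (Fin n))) = l := by
  refine List.ext_getElem? fun i => ?_
  rw [List.getElem?_ofFn]
  split_ifs with hi
  · rw [List.getElem?_eq_getElem (hl ▸ hi)]
    simp only [steps, openers, mem_filter, mem_univ, true_and, List.getElem?_eq_getElem (hl ▸ hi),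
      Option.some.injEq]
    cases l[i] <;> rfl
  · exact (List.getElem?_eq_none (by omega)).symm

lemma openers_ofFn_steps (O : Finset (Fin n)) : openers (List.ofFn (steps O)) = O := by
  ext q
  by_cases hq : q ∈ O <;> simp [openers, steps, hq]

lemma isBallot_openers {l : List DyckStep} (hl : l.length = n)
    (hcount : l.count U = l.count D) (hprefix : ∀ i, (l.take i).count D ≤ (l.take i).count U) :
    IsBallot (openers l : Finset (Fin n)) := by
  refine ⟨?_, fun i => ?_⟩ <;> rw [height_eq_count_take, ofFn_steps_openers hl]
  · rw [List.take_of_length_le hl.le, hcount, sub_self]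
  · exact sub_nonneg.2 (Nat.cast_le.2 (hprefix i))

def dyckWordOfBallot {O : Finset (Fin n)} (hO : IsBallot O) : DyckWord where
  toList := List.ofFn (steps O)
  count_U_eq_count_D := by
    have := height_eq_count_take O n
    rw [List.take_of_length_le (List.length_ofFn).le, hO.1] at this
    omega
  count_D_le_count_U i := by
    have := height_eq_count_take O i
    have := hO.2 i
    omega

noncomputable def ballotEquivDyckWord (n : ℕ) :
    {O : Finset (Fin n) // IsBallot O} ≃ {w : DyckWord // w.toList.length = n} where
  toFun O := ⟨dyckWordOfBallot O.2, List.length_ofFn⟩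
  invFun w := ⟨openers w.1.toList,
    isBallot_openers w.2 w.1.count_U_eq_count_D w.1.count_D_le_count_U⟩
  left_inv O := Subtype.ext (openers_ofFn_steps O.1)
  right_inv w := Subtype.ext (DyckWord.ext (ofFn_steps_openers w.2))

end BallotToDyck

theorem card_noncross (k : ℕ) : Nat.card {p : PP k // Noncross p.1.1 p.1.2} = catalan k := by
  have hlen : ∀ w : DyckWord, w.toList.length = 2 * k ↔ w.semilength = k := fun w => by
    rw [← w.two_mul_semilength_eq_length]
    omega
  rw [Nat.card_congr ((noncrossEquivBallot k).trans ((ballotEquivDyckWord (2 * k)).trans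
    (Equiv.subtypeEquivRight hlen))), Nat.card_eq_fintype_card,
    DyckWord.card_dyckWord_semilength_eq_catalan]

end NoncrossingPairing

open Filter Topology in
lemma tendsto_natCast_zpow_mul_const {e : ℤ} (he : e ≤ 0) (c : ℝ) :
    Tendsto (fun m : ℕ => (m : ℝ) ^ e * c) atTop (𝓝 (if e = 0 then c else 0)) := by
  split_ifs with h0
  · simp [h0]
  · simpa using ((tendsto_zpow_atTop_zero (lt_of_le_of_ne he h0)).comp
      tendsto_natCast_atTop_atTop).mul_const c

theorem tendsto_mom_catalan_general (k : ℕ) (hk : 1 ≤ k)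
    (hf : ∀ p : PP k, k - 1 ≤ fRank p.1.1 p.1.2 ∧
      (fRank p.1.1 p.1.2 = k - 1 ↔ Noncross p.1.1 p.1.2))
    (hI : ∀ p : PP k, Noncross p.1.1 p.1.2 → ppIntegral p.2 = 1) :
    Filter.Tendsto (fun m : ℕ => mom m k) Filter.atTop (nhds (catalan k)) := by
  classical
  have hterm : ∀ p : PP k, Filter.Tendsto
      (fun m : ℕ => (m : ℝ) ^ ((k : ℤ) - 1 - (fRank p.1.1 p.1.2 : ℤ)) * ppIntegral p.2)
      Filter.atTop (nhds (if Noncross p.1.1 p.1.2 then 1 else 0)) := by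
    intro p
    have hle : (k : ℤ) - 1 - fRank p.1.1 p.1.2 ≤ 0 := by have := (hf p).1; omega
    have heq : (k : ℤ) - 1 - fRank p.1.1 p.1.2 = 0 ↔ Noncross p.1.1 p.1.2 := by
      rw [← (hf p).2]; omega
    convert tendsto_natCast_zpow_mul_const hle (ppIntegral p.2) using 2
    by_cases hp : Noncross p.1.1 p.1.2 <;> simp [hp, heq, hI]
  have hsum := tendsto_finsetSum Finset.univ fun p _ => hterm p
  rwa [Finset.sum_boole, ← Fintype.card_subtype, ← Nat.card_eq_fintype_card,
    NoncrossingPairing.card_noncross] at hsum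

/-- `lim_{m→∞} m_{2k}(γ_T^{(m)}) = C_k`, the k-th Catalan number. -/
theorem tendsto_mom_catalan (k : ℕ) (hk : 1 ≤ k)
    (hf : ∀ p : PP k, k - 1 ≤ fRank p.1.1 p.1.2 ∧
      (fRank p.1.1 p.1.2 = k - 1 ↔ Noncross p.1.1 p.1.2))
    (hI : ∀ p : PP k, Noncross p.1.1 p.1.2 → ppIntegral p.2 = 1)
    (hI01 : ∀ p : PP k, ppIntegral p.2 ∈ Set.Icc (0:ℝ) 1) :
    Filter.Tendsto (fun m : ℕ => mom m k) Filter.atTop (nhds (catalan k)) :=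
  tendsto_mom_catalan_general k hk hf hI
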